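/- Fix an odd integer c ≥ 3, the pattern set being the cyclic shifts of the identity of S_c. The map rot: x ↦ (2 3 ⋯ n 1)∘x on S_n preserves, for every position i, whether the factor x_i x_{i+1} ⋯ x_{i+c-1} has standardization equal to a cyclic shift of the identity. In particular, rot permutes the set of non-avoiders, the set of hit-openers, and the set of hit-huggers. -/

import Mathlib

/-!
Write `rot = cycSucc n` for the cyclic successor on `{1, …, n}`. On a factor `u` of `w` that
avoids the letter `n`, `rot` is `v ↦ v + 1`, which is increasing and so leaves the
standardization unchanged. If `u` contains `n`, then `n` becomes the smallest letter `1` while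
all other letters keep their relative order, so the standardization of `rot u` is that of `u`
with `cycSucc c` applied to it. As `cycSucc c` maps the identity of `S_c` to one of its cyclic
shifts, being a cyclic shift of the identity is preserved in both cases.
-/

/-- The standardization (order permutation) of a word with distinct letters. -/
def stdz (w : List ℕ) : List ℕ :=
  w.map (fun x => 1 + w.countP (fun y => decide (y < x)))

/-- `u` is a cyclic shift of `m`. -/
def IsCyclicShiftOf (u m : List ℕ) : Prop := ∃ a ≤ m.length, u = m.rotate a

/-- The contiguous factor of `w` of length `c` starting at (0-indexed) position `i` is a hit:
its standardization is a cyclic shift of the identity of `S_c`. -/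
def HitAt (c : ℕ) (w : List ℕ) (i : ℕ) : Prop :=
  i + c ≤ w.length ∧ IsCyclicShiftOf (stdz ((w.drop i).take c)) (List.range' 1 c)

/-- A non-avoider: a permutation with at least one hit. -/
def NonAvoiderId (c : ℕ) (w : List ℕ) : Prop := ∃ i, HitAt c w i

/-- A hit-opener: a permutation whose only hit starts at the first position. -/
def HitOpener (c : ℕ) (w : List ℕ) : Prop :=
  HitAt c w 0 ∧ ∀ i, HitAt c w i → i = 0

/-- A hit-hugger: a permutation whose only hits start at the first position and at
position `n - c + 1` (0-indexed: `n - c`). -/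
def HitHugger (c : ℕ) (w : List ℕ) : Prop :=
  HitAt c w 0 ∧ HitAt c w (w.length - c) ∧
    ∀ i, HitAt c w i → i = 0 ∨ i = w.length - c

/-- `rot`: add `1` to each letter, with `n` replaced by `1`. -/
def rotP (n : ℕ) (w : List ℕ) : List ℕ :=
  w.map (fun v => if v = n then 1 else v + 1)

open List

def cycSucc (c v : ℕ) : ℕ := if v = c then 1 else v + 1

def cycPred (c v : ℕ) : ℕ := if v = 1 then c else v - 1

section Cyclic

variable {c v : ℕ}

@[simp]
lemma cycSucc_self : cycSucc c c = 1 := if_pos rfl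

lemma cycSucc_of_ne (h : v ≠ c) : cycSucc c v = v + 1 := if_neg h

lemma one_le_cycSucc : 1 ≤ cycSucc c v := by
  unfold cycSucc
  split_ifs <;> omega

lemma cycPred_cycSucc (hv : 1 ≤ v) : cycPred c (cycSucc c v) = v := by
  unfold cycSucc cycPred
  split_ifs <;> omega

lemma rotP_eq_map_cycSucc (n : ℕ) (w : List ℕ) : rotP n w = w.map (cycSucc n) := rfl

lemma map_cycSucc_range' : (range' 1 c).map (cycSucc c) = (range' 1 c).rotate 1 := by
  cases c with
  | zero => rfl
  | succ m =>
    have hinit : (range' 1 m).map (cycSucc (m + 1)) = range' 2 m := by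
      refine (map_congr_left fun v hv => cycSucc_of_ne ?_).trans range'_succ_left.symm
      have := mem_range'_1.mp hv
      omega
    have hrot : (range' 1 (m + 1)).rotate 1 = range' 2 m ++ [1] := by
      rw [range'_succ, rotate_cons_succ, rotate_zero]
    rw [hrot, range'_1_concat, map_append, hinit]
    simp [Nat.add_comm]

lemma isCyclicShiftOf_iff_isRotated {u m : List ℕ} : IsCyclicShiftOf u m ↔ m ~r u := by
  simp only [IsCyclicShiftOf, isRotated_iff_mod, eq_comm]

lemma range'_isRotated_map_cycSucc : range' 1 c ~r (range' 1 c).map (cycSucc c) := by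
  rw [map_cycSucc_range']
  exact (IsRotated.forall _ 1).symm

lemma map_cycPred_map_cycSucc {L : List ℕ} (hL : ∀ v ∈ L, 1 ≤ v) :
    (L.map (cycSucc c)).map (cycPred c) = L := by
  rw [map_map]
  exact (map_congr_left fun v hv => cycPred_cycSucc (hL v hv)).trans (map_id L)

lemma range'_isRotated_map_cycSucc_iff {L : List ℕ} (hL : ∀ v ∈ L, 1 ≤ v) :
    range' 1 c ~r L.map (cycSucc c) ↔ range' 1 c ~r L := by
  refine ⟨fun h => ?_, fun h => range'_isRotated_map_cycSucc.trans (h.map _)⟩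
  have hpred : (range' 1 c).map (cycPred c) ~r range' 1 c := by
    simpa [map_cycPred_map_cycSucc fun v hv => (mem_range'_1.mp hv).1] using
      (range'_isRotated_map_cycSucc (c := c)).map (cycPred c)
  simpa [map_cycPred_map_cycSucc hL] using hpred.symm.trans (h.map (cycPred c))

end Cyclic

section Standardization

lemma stdz_map_of_strictMono {f : ℕ → ℕ} (hf : StrictMono f) (u : List ℕ) :
    stdz (u.map f) = stdz u := by
  unfold stdz
  rw [map_map]
  refine map_congr_left fun x _ => ?_
  simp only [countP_map, Function.comp_def, hf.lt_iff_lt]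

lemma one_le_of_mem_stdz {u : List ℕ} {v : ℕ} (hv : v ∈ stdz u) : 1 ≤ v := by
  obtain ⟨x, -, rfl⟩ := mem_map.mp hv
  omega

variable {n : ℕ} {u : List ℕ}

lemma stdz_map_cycSucc_of_not_mem (hn : n ∉ u) : stdz (u.map (cycSucc n)) = stdz u := by
  have : u.map (cycSucc n) = u.map (· + 1) :=
    map_congr_left fun v hv => cycSucc_of_ne fun h => hn (h ▸ hv)
  rw [this, stdz_map_of_strictMono (fun _ _ h => Nat.succ_lt_succ h)]

lemma stdz_map_cycSucc_of_mem (hnd : u.Nodup) (hu : ∀ x ∈ u, 1 ≤ x ∧ x ≤ n) (hn : n ∈ u) :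
    stdz (u.map (cycSucc n)) = (stdz u).map (cycSucc u.length) := by
  -- counting over `n :: u.erase n` separates the top letter from the rest, which all lie below it
  have hperm : u ~ n :: u.erase n := perm_cons_erase hn
  have hrest : ∀ y ∈ u.erase n, 1 ≤ y ∧ y < n := fun y hy => by
    obtain ⟨hyn, hyu⟩ := (hnd.mem_erase_iff).mp hy
    have := hu y hyu
    omega
  unfold stdz
  rw [map_map, map_map]
  refine map_congr_left fun x hx => ?_
  simp only [Function.comp_def, countP_map, hperm.countP_eq _, hperm.length_eq, countP_cons,
    length_cons]
  by_cases hxn : x = n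
  · subst hxn
    have hsucc : (u.erase x).countP (fun y => decide (cycSucc x y < 1)) = 0 :=
      countP_eq_zero.mpr fun _ _ => by simpa using Nat.one_le_iff_ne_zero.mp one_le_cycSucc
    have hpred : (u.erase x).countP (fun y => decide (y < x)) = (u.erase x).length :=
      countP_eq_length.mpr fun y hy => by simpa using (hrest y hy).2
    rw [cycSucc_self, hsucc, hpred]
    simp [Nat.add_comm]
  · have hx' : x ∈ u.erase n := (hnd.mem_erase_iff).mpr ⟨hxn, hx⟩
    obtain ⟨hx_pos, hlt⟩ := hrest x hx'
    have hx1 : 1 < x + 1 := by omega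
    have hcount : (u.erase n).countP (fun y => decide (cycSucc n y < cycSucc n x)) =
        (u.erase n).countP (fun y => decide (y < x)) :=
      countP_congr fun y hy => by
        simp [cycSucc_of_ne hxn, cycSucc_of_ne (Nat.ne_of_lt (hrest y hy).2)]
    have hsmall : (u.erase n).countP (fun y => decide (y < x)) < (u.erase n).length :=
      Nat.lt_of_le_of_ne countP_le_length fun h => by
        simpa using countP_eq_length.mp h x hx'
    have hrank : 1 + (u.erase n).countP (fun y => decide (y < x)) ≠ (u.erase n).length + 1 := by
      omega
    rw [hcount, cycSucc_self, cycSucc_of_ne hxn]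
    simp only [hx1, Nat.not_lt.mpr hlt.le, decide_true, decide_false, if_true,
      Bool.false_eq_true, if_false, Nat.add_zero, cycSucc_of_ne hrank]
    omega

end Standardization

theorem hitAt_rotP_iff {c n : ℕ} {w : List ℕ} (hw : w ~ range' 1 n) (i : ℕ) :
    HitAt c (rotP n w) i ↔ HitAt c w i := by
  unfold HitAt
  rw [rotP_eq_map_cycSucc, length_map, ← map_drop, ← map_take]
  refine and_congr_right fun hic => ?_
  set u := (w.drop i).take c
  have hsub : u <+ w := (take_sublist _ _).trans (drop_sublist _ _)
  by_cases hn : n ∈ u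
  · have hnd : u.Nodup := hsub.nodup (hw.nodup_iff.mpr (nodup_range' ..))
    have hu : ∀ x ∈ u, 1 ≤ x ∧ x ≤ n := fun x hx => by
      have := mem_range'_1.mp (hw.mem_iff.mp (hsub.subset hx))
      omega
    have hlen : u.length = c := by simp [u]; omega
    rw [stdz_map_cycSucc_of_mem hnd hu hn, hlen, isCyclicShiftOf_iff_isRotated,
      isCyclicShiftOf_iff_isRotated]
    exact range'_isRotated_map_cycSucc_iff fun v => one_le_of_mem_stdz
  · rw [stdz_map_cycSucc_of_not_mem hn]

theorem stmt7_general (c n : ℕ) (w : List ℕ)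
    (hw : w.Perm (List.range' 1 n)) :
    (∀ i, HitAt c (rotP n w) i ↔ HitAt c w i) ∧
    (NonAvoiderId c (rotP n w) ↔ NonAvoiderId c w) ∧
    (HitOpener c (rotP n w) ↔ HitOpener c w) ∧
    (HitHugger c (rotP n w) ↔ HitHugger c w) := by
  have hit := hitAt_rotP_iff (c := c) hw
  have hlen : (rotP n w).length = w.length := length_map _
  refine ⟨hit, ?_⟩
  simp only [NonAvoiderId, HitOpener, HitHugger, hit, hlen, and_self]

/-- For odd `c ≥ 3`, the map `rot` preserves, positionwise, whether each length-`c` factor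
is a hit (standardization a cyclic shift of the identity of `S_c`); in particular it
permutes the non-avoiders, the hit-openers, and the hit-huggers of `S_n`. -/
theorem stmt7 (c n : ℕ) (hc : 3 ≤ c) (hco : Odd c) (w : List ℕ)
    (hw : w.Perm (List.range' 1 n)) :
    (∀ i, HitAt c (rotP n w) i ↔ HitAt c w i) ∧
    (NonAvoiderId c (rotP n w) ↔ NonAvoiderId c w) ∧
    (HitOpener c (rotP n w) ↔ HitOpener c w) ∧
    (HitHugger c (rotP n w) ↔ HitHugger c w) :=
  stmt7_general c n w hw
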